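/- arXiv:2212.05990 — 5 statements merged into one kernel-verified Lean document; each statement's English description precedes it below -/
import Mathlib

section
/- The precision of a set of fixed features is not monotone with respect to set inclusion: there exist m, finite domains D_1,…,D_m, a classifier κ : 𝔽 → K, an instance v ∈ 𝔽 with κ(v) = c, and sets S' ⊆ S ⊆ F, such that Prob(κ(x) = c | x_{S'} = v_{S'}) > Prob(κ(x) = c | x_S = v_S). (For example, with m = 2, boolean domains, κ mapping (0,0), (1,0), (1,1) to c and (0,1) to a different class, v = (0,0), S = {1}, S' = ∅, the precisions are 3/4 > 1/2.) -/
/-! Take `κ x = (x₁ → x₀)` on `𝔹²`, `v = (0, 0)` and `c = 1`. The only point rejected by `κ`,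
namely `(0, 1)`, agrees with `v` on feature `0`, so fixing that feature halves the space without
removing it: the precision drops from `3/4` to `1/2`. -/

noncomputable def precision {m : ℕ} {D : Fin m → Type} {K : Type} (κ : ((i : Fin m) → D i) → K)
    (v : (i : Fin m) → D i) (c : K) (S : Finset (Fin m)) : ℝ :=
  (Nat.card {x : (i : Fin m) → D i // κ x = c ∧ ∀ i ∈ S, x i = v i} : ℝ) /
    (Nat.card {x : (i : Fin m) → D i // ∀ i ∈ S, x i = v i} : ℝ)

def implicationClassifier (x : Fin 2 → Bool) : Bool :=
  x 0 || !x 1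

theorem precision_implicationClassifier_empty :
    precision implicationClassifier (fun _ => false) true ∅ = 3 / 4 := by
  have hc : Nat.card {x : Fin 2 → Bool // implicationClassifier x = true ∧
      ∀ i ∈ (∅ : Finset (Fin 2)), x i = false} = 3 := by
    rw [Nat.card_eq_fintype_card]; decide
  have hd : Nat.card {x : Fin 2 → Bool // ∀ i ∈ (∅ : Finset (Fin 2)), x i = false} = 4 := by
    rw [Nat.card_eq_fintype_card]; decide
  rw [precision, hc, hd]
  norm_num

theorem precision_implicationClassifier_singleton_zero :
    precision implicationClassifier (fun _ => false) true {0} = 1 / 2 := by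
  have hc : Nat.card {x : Fin 2 → Bool // implicationClassifier x = true ∧
      ∀ i ∈ ({0} : Finset (Fin 2)), x i = false} = 1 := by
    rw [Nat.card_eq_fintype_card]; decide
  have hd : Nat.card {x : Fin 2 → Bool // ∀ i ∈ ({0} : Finset (Fin 2)), x i = false} = 2 := by
    rw [Nat.card_eq_fintype_card]; decide
  rw [precision, hc, hd]
  norm_num

/-- Precision is not monotone w.r.t. set inclusion: there is a classifier, an instance
and sets `S' ⊆ S` such that the precision of `S'` strictly exceeds that of `S`. -/
theorem precision_not_monotone :
    ∃ (m : ℕ), 1 ≤ m ∧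
    ∃ (D : Fin m → Type) (_ : ∀ i, Fintype (D i)) (_ : ∀ i, Nonempty (D i))
      (K : Type) (κ : ((i : Fin m) → D i) → K) (v : (i : Fin m) → D i) (c : K),
      κ v = c ∧
      ∃ (S' S : Finset (Fin m)), S' ⊆ S ∧
        (Nat.card {x : (i : Fin m) → D i // κ x = c ∧ ∀ i ∈ S', x i = v i} : ℝ) /
            (Nat.card {x : (i : Fin m) → D i // ∀ i ∈ S', x i = v i} : ℝ) >
          (Nat.card {x : (i : Fin m) → D i // κ x = c ∧ ∀ i ∈ S, x i = v i} : ℝ) /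
            (Nat.card {x : (i : Fin m) → D i // ∀ i ∈ S, x i = v i} : ℝ) := by
  refine ⟨2, one_le_two, fun _ => Bool, fun _ => inferInstance, fun _ => inferInstance,
    Bool, implicationClassifier, fun _ => false, true, rfl, ∅, {0}, Finset.empty_subset _, ?_⟩
  change precision implicationClassifier (fun _ => false) true ∅ >
    precision implicationClassifier (fun _ => false) true {0}
  rw [precision_implicationClassifier_empty, precision_implicationClassifier_singleton_zero]
  norm_num
end

section
/- Conditional probability for a classifier given by a partition into boxes (the decision-tree formula, eq. (18)): suppose B_1, …, B_n are pairwise disjoint boxes, with B_k = {x ∈ 𝔽 : x_i ∈ E_{i,k} for all i ∈ F}, whose union is 𝔽, and κ is constant on each B_k with value c_k; let v ∈ 𝔽 with κ(v) = c. For X ⊆ F write #_k = ∏_{i ∈ X} |E_{i,k} ∩ {v_i}| · ∏_{i ∉ X} |E_{i,k}|. Then Σ_{k=1}^n #_k = ∏_{i ∉ X} |D_i| > 0 and Prob(κ(x) = c | x_X = v_X) = (Σ_{k : c_k = c} #_k) / (Σ_{k=1}^n #_k). -/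
/-! Each box meets the slice `{x | x_X = v_X}` in a smaller box, whose size is the product
`#_k`. Since the boxes partition `𝔽`, counting the slice (or the part of it classified as `c`)
box by box gives `Σ_k #_k` (respectively `Σ_{k : c_k = c} #_k`), and counting the slice directly
gives `∏_{i ∉ X} |D_i|`. -/

open Finset Fintype

section Boxes

variable {ι : Type*} [Fintype ι] [DecidableEq ι] {α : ι → Type*} [∀ i, DecidableEq (α i)]

theorem Fintype.filter_piFinset_eqOn (E : ∀ i, Finset (α i)) (X : Finset ι) (v : ∀ i, α i)
    [DecidablePred fun x : ∀ i, α i => ∀ i ∈ X, x i = v i] :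
    (piFinset E).filter (fun x : ∀ i, α i => ∀ i ∈ X, x i = v i) =
      piFinset (fun i => if i ∈ X then E i ∩ {v i} else E i) := by
  ext x
  simp only [mem_filter, mem_piFinset, ← forall_and]
  refine forall_congr' fun i => ?_
  split_ifs with hi <;> simp [hi]

theorem Fintype.card_filter_piFinset_eqOn (E : ∀ i, Finset (α i)) (X : Finset ι)
    (v : ∀ i, α i) [DecidablePred fun x : ∀ i, α i => ∀ i ∈ X, x i = v i] :
    ((piFinset E).filter (fun x : ∀ i, α i => ∀ i ∈ X, x i = v i)).card =
      (∏ i ∈ X, (E i ∩ {v i}).card) * ∏ i ∈ Xᶜ, (E i).card := by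
  rw [filter_piFinset_eqOn, card_piFinset, ← prod_mul_prod_compl X]
  congr 1
  · refine Finset.prod_congr rfl fun i hi => ?_
    rw [if_pos hi]
  · refine Finset.prod_congr rfl fun i hi => ?_
    rw [if_neg (mem_compl.1 hi)]

theorem Fintype.card_filter_eq_sum_card_filter_piFinset [∀ i, Fintype (α i)] {β : Type*}
    [Fintype β] (E : β → ∀ i, Finset (α i))
    (hdisj : ∀ k l : β, k ≠ l → ∀ x : ∀ i, α i,
      ¬ ((∀ i, x i ∈ E k i) ∧ (∀ i, x i ∈ E l i)))
    (hcover : ∀ x : ∀ i, α i, ∃ k, ∀ i, x i ∈ E k i)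
    (p : (∀ i, α i) → Prop) [DecidablePred p] :
    (univ.filter p).card = ∑ k, ((piFinset (E k)).filter p).card := by
  have hunion : univ.filter p = univ.biUnion (fun k => (piFinset (E k)).filter p) := by
    ext x
    obtain ⟨k, hk⟩ := hcover x
    simp only [mem_filter, mem_univ, true_and, mem_biUnion, mem_piFinset]
    exact ⟨fun hp => ⟨k, hk, hp⟩, fun ⟨_, _, hp⟩ => hp⟩
  rw [hunion, card_biUnion]
  intro k _ l _ hkl
  refine disjoint_left.2 fun x hxk hxl => hdisj k l hkl x ⟨?_, ?_⟩
  · exact mem_piFinset.1 (mem_filter.1 hxk).1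
  · exact mem_piFinset.1 (mem_filter.1 hxl).1

end Boxes

theorem Finset.card_filter_eq_and_of_forall_eq {γ K : Type*} [DecidableEq K] (s : Finset γ)
    (f : γ → K) {a : K} (hf : ∀ x ∈ s, f x = a) (c : K) (p : γ → Prop) [DecidablePred p] :
    (s.filter (fun x => f x = c ∧ p x)).card = if a = c then (s.filter p).card else 0 := by
  split_ifs with hac
  · exact congrArg card (filter_congr fun x hx => by simp [hf x hx, hac])
  · exact card_eq_zero.2 (filter_eq_empty_iff.2 fun x hx h => hac (hf x hx ▸ h.1))

theorem box_partition_conditional_probability_general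
    {m : ℕ} (D : Fin m → Type) [∀ i, Fintype (D i)] [∀ i, Nonempty (D i)]
    [∀ i, DecidableEq (D i)]
    {K : Type} [DecidableEq K] (κ : ((i : Fin m) → D i) → K)
    (v : (i : Fin m) → D i) (c : K)
    (n : ℕ) (E : Fin n → (i : Fin m) → Finset (D i)) (cls : Fin n → K)
    (hdisj : ∀ k l : Fin n, k ≠ l → ∀ x : (i : Fin m) → D i,
      ¬ ((∀ i, x i ∈ E k i) ∧ (∀ i, x i ∈ E l i)))
    (hcover : ∀ x : (i : Fin m) → D i, ∃ k : Fin n, ∀ i, x i ∈ E k i)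
    (hconst : ∀ (k : Fin n) (x : (i : Fin m) → D i), (∀ i, x i ∈ E k i) → κ x = cls k)
    (X : Finset (Fin m)) :
    (∑ k : Fin n, (∏ i ∈ X, (E k i ∩ {v i}).card) * ∏ i ∈ Xᶜ, (E k i).card)
        = ∏ i ∈ Xᶜ, Fintype.card (D i) ∧
    0 < ∏ i ∈ Xᶜ, Fintype.card (D i) ∧
    (Nat.card {x : (i : Fin m) → D i // κ x = c ∧ ∀ i ∈ X, x i = v i} : ℝ) /
        (Nat.card {x : (i : Fin m) → D i // ∀ i ∈ X, x i = v i} : ℝ) =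
      ((∑ k ∈ Finset.univ.filter (fun k : Fin n => cls k = c),
          (∏ i ∈ X, (E k i ∩ {v i}).card) * ∏ i ∈ Xᶜ, (E k i).card : ℕ) : ℝ) /
      ((∑ k : Fin n,
          (∏ i ∈ X, (E k i ∩ {v i}).card) * ∏ i ∈ Xᶜ, (E k i).card : ℕ) : ℝ) := by
  have hslice_by_boxes : (univ.filter fun x : ∀ i, D i => ∀ i ∈ X, x i = v i).card =
      ∑ k, (∏ i ∈ X, (E k i ∩ {v i}).card) * ∏ i ∈ Xᶜ, (E k i).card := by
    rw [card_filter_eq_sum_card_filter_piFinset E hdisj hcover]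
    exact sum_congr rfl fun k _ => card_filter_piFinset_eqOn (E k) X v
  have hslice : (univ.filter fun x : ∀ i, D i => ∀ i ∈ X, x i = v i).card =
      ∏ i ∈ Xᶜ, Fintype.card (D i) := by
    simpa using card_filter_piFinset_eqOn (fun i => (univ : Finset (D i))) X v
  have hclass_by_boxes : (univ.filter fun x => κ x = c ∧ ∀ i ∈ X, x i = v i).card =
      ∑ k ∈ univ.filter (fun k => cls k = c),
        (∏ i ∈ X, (E k i ∩ {v i}).card) * ∏ i ∈ Xᶜ, (E k i).card := by
    rw [card_filter_eq_sum_card_filter_piFinset E hdisj hcover, sum_filter]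
    refine sum_congr rfl fun k _ => ?_
    rw [card_filter_eq_and_of_forall_eq _ κ (fun x hx => hconst k x (mem_piFinset.1 hx)),
      card_filter_piFinset_eqOn]
  refine ⟨hslice_by_boxes ▸ hslice, prod_pos fun i _ => card_pos, ?_⟩
  simp only [Nat.card_eq_fintype_card, Fintype.card_subtype, hclass_by_boxes, hslice_by_boxes]

/-- Conditional probability for a classifier given by a partition of feature space into
boxes on which the classifier is constant (the decision-tree formula, eq. (18)):
the total count `Σ_k #_k` equals `∏_{i ∉ X} |D_i| > 0`, and
`Prob(κ(x) = c | x_X = v_X) = (Σ_{k : c_k = c} #_k) / (Σ_k #_k)`. -/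
theorem box_partition_conditional_probability
    {m : ℕ} (hm : 1 ≤ m) (D : Fin m → Type) [∀ i, Fintype (D i)] [∀ i, Nonempty (D i)]
    [∀ i, DecidableEq (D i)]
    {K : Type} [DecidableEq K] (κ : ((i : Fin m) → D i) → K)
    (v : (i : Fin m) → D i) (c : K) (hv : κ v = c)
    (n : ℕ) (E : Fin n → (i : Fin m) → Finset (D i)) (cls : Fin n → K)
    (hdisj : ∀ k l : Fin n, k ≠ l → ∀ x : (i : Fin m) → D i,
      ¬ ((∀ i, x i ∈ E k i) ∧ (∀ i, x i ∈ E l i)))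
    (hcover : ∀ x : (i : Fin m) → D i, ∃ k : Fin n, ∀ i, x i ∈ E k i)
    (hconst : ∀ (k : Fin n) (x : (i : Fin m) → D i), (∀ i, x i ∈ E k i) → κ x = cls k)
    (X : Finset (Fin m)) :
    (∑ k : Fin n, (∏ i ∈ X, (E k i ∩ {v i}).card) * ∏ i ∈ Xᶜ, (E k i).card)
        = ∏ i ∈ Xᶜ, Fintype.card (D i) ∧
    0 < ∏ i ∈ Xᶜ, Fintype.card (D i) ∧
    (Nat.card {x : (i : Fin m) → D i // κ x = c ∧ ∀ i ∈ X, x i = v i} : ℝ) /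
        (Nat.card {x : (i : Fin m) → D i // ∀ i ∈ X, x i = v i} : ℝ) =
      ((∑ k ∈ Finset.univ.filter (fun k : Fin n => cls k = c),
          (∏ i ∈ X, (E k i ∩ {v i}).card) * ∏ i ∈ Xᶜ, (E k i).card : ℕ) : ℝ) /
      ((∑ k : Fin n,
          (∏ i ∈ X, (E k i ∩ {v i}).card) * ∏ i ∈ Xᶜ, (E k i).card : ℕ) : ℝ) :=
  box_partition_conditional_probability_general D κ v c n E cls hdisj hcover hconst X
end

section
/- If B_1, …, B_n are pairwise disjoint boxes with union 𝔽 on which κ is constant with values c_1,…,c_n, v ∈ 𝔽 lies in B_t, and c_t = c, then the set X = {i ∈ F : E_{i,t} ≠ D_i} of features actually restricted along B_t is a weak AXp for (κ, v, c): every x ∈ 𝔽 with x_i = v_i for all i ∈ X satisfies κ(x) = c. (This justifies initializing the deletion-based AXp algorithm for decision trees with the features tested on the path consistent with v.) -/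
open Finset

theorem Finset.mem_of_eq_of_ne_univ {α : Type*} [Fintype α] {s : Finset α} {a b : α}
    (hb : b ∈ s) (hab : s ≠ univ → a = b) : a ∈ s := by
  by_cases hs : s = univ
  · exact hs ▸ mem_univ a
  · exact hab hs ▸ hb

theorem mem_box_of_eq_on_restricted {ι : Type*} {D : ι → Type*} [∀ i, Fintype (D i)]
    {E : ∀ i, Finset (D i)} {v x : ∀ i, D i} (hv : ∀ i, v i ∈ E i)
    (hx : ∀ i, E i ≠ univ → x i = v i) (i : ι) : x i ∈ E i :=
  Finset.mem_of_eq_of_ne_univ (hv i) (hx i)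

theorem path_features_weak_axp_general
    {m : ℕ} (D : Fin m → Type) [∀ i, Fintype (D i)]
    [∀ i, DecidableEq (D i)]
    {K : Type} (κ : ((i : Fin m) → D i) → K)
    (v : (i : Fin m) → D i) (c : K)
    (n : ℕ) (E : Fin n → (i : Fin m) → Finset (D i)) (cls : Fin n → K)
    (hconst : ∀ (k : Fin n) (x : (i : Fin m) → D i), (∀ i, x i ∈ E k i) → κ x = cls k)
    (t : Fin n) (hvt : ∀ i, v i ∈ E t i) (hct : cls t = c) :
    ∀ x : (i : Fin m) → D i,
      (∀ i ∈ Finset.univ.filter (fun i : Fin m => E t i ≠ Finset.univ), x i = v i) →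
        κ x = c := by
  intro x hx
  have hxt : ∀ i, x i ∈ E t i :=
    mem_box_of_eq_on_restricted hvt fun i hi => hx i (mem_filter.mpr ⟨mem_univ i, hi⟩)
  rw [hconst t x hxt, hct]

/-- If `v` lies in a box `B_t` of a box-partition of feature space on which `κ` is
constant with value `c`, then the set of features actually restricted along `B_t`
(those with `E_{i,t} ≠ D_i`) is a weak AXp for `(κ, v, c)`. -/
theorem path_features_weak_axp
    {m : ℕ} (hm : 1 ≤ m) (D : Fin m → Type) [∀ i, Fintype (D i)] [∀ i, Nonempty (D i)]
    [∀ i, DecidableEq (D i)]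
    {K : Type} (κ : ((i : Fin m) → D i) → K)
    (v : (i : Fin m) → D i) (c : K) (hv : κ v = c)
    (n : ℕ) (E : Fin n → (i : Fin m) → Finset (D i)) (cls : Fin n → K)
    (hdisj : ∀ k l : Fin n, k ≠ l → ∀ x : (i : Fin m) → D i,
      ¬ ((∀ i, x i ∈ E k i) ∧ (∀ i, x i ∈ E l i)))
    (hcover : ∀ x : (i : Fin m) → D i, ∃ k : Fin n, ∀ i, x i ∈ E k i)
    (hconst : ∀ (k : Fin n) (x : (i : Fin m) → D i), (∀ i, x i ∈ E k i) → κ x = cls k)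
    (t : Fin n) (hvt : ∀ i, v i ∈ E t i) (hct : cls t = c) :
    ∀ x : (i : Fin m) → D i,
      (∀ i ∈ Finset.univ.filter (fun i : Fin m => E t i ≠ Finset.univ), x i = v i) →
        κ x = c :=
  path_features_weak_axp_general D κ v c n E cls hconst t hvt hct
end

section
/- Characterization of weak AXp's of an extended linear classifier (eq. (36)–(39)): let ν(x) = w_0 + Σ_{i=1}^m u_i(x_i) with w_0 ∈ ℝ and u_i : D_i → ℝ, let κ(x) = ⊕ if ν(x) > 0 and κ(x) = ⊖ otherwise, and let a ∈ 𝔽 with ν(a) > 0 (so κ(a) = ⊕). Set δ_i = u_i(a_i) − min_{u ∈ D_i} u_i(u) ≥ 0 and Φ = Σ_{i=1}^m δ_i − ν(a). Then for every X ⊆ F the following are equivalent: (i) every x ∈ 𝔽 with x_i = a_i for all i ∈ X satisfies ν(x) > 0 (X is a weak AXp); (ii) w_0 + Σ_{i ∈ X} u_i(a_i) + Σ_{i ∉ X} min_{u ∈ D_i} u_i(u) > 0; (iii) Σ_{i ∈ X} δ_i > Φ. -/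
/-!
Since `ν` is a sum of one-variable terms, its minimum over the points agreeing with `a` on `X`
is attained by putting a minimiser of `uᵢ` in every free coordinate `i ∉ X`; condition (ii) says
exactly that this minimum is positive, and (iii) is (ii) after subtracting `ν(a)`.
-/

open Finset

section

variable {ι : Type*} [Fintype ι] [DecidableEq ι] {D : ι → Type*}
  [∀ i, Fintype (D i)] [∀ i, Nonempty (D i)]

theorem sum_add_sum_compl_inf'_le_sum (u : (i : ι) → D i → ℝ) {X : Finset ι}
    {a x : (i : ι) → D i} (hx : ∀ i ∈ X, x i = a i) :
    ∑ i ∈ X, u i (a i) + ∑ i ∈ Xᶜ, univ.inf' univ_nonempty (u i) ≤ ∑ i, u i (x i) := by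
  rw [← sum_add_sum_compl X, sum_congr rfl fun i hi => congrArg (u i) (hx i hi)]
  gcongr with i
  exact inf'_le _ (mem_univ _)

theorem exists_eqOn_sum_eq_sum_add_sum_compl_inf' (u : (i : ι) → D i → ℝ) (X : Finset ι)
    (a : (i : ι) → D i) :
    ∃ x : (i : ι) → D i, (∀ i ∈ X, x i = a i) ∧
      ∑ i, u i (x i) = ∑ i ∈ X, u i (a i) + ∑ i ∈ Xᶜ, univ.inf' univ_nonempty (u i) := by
  choose b hb using fun i => exists_mem_eq_inf' univ_nonempty (u i)
  refine ⟨fun i => if i ∈ X then a i else b i, fun i hi => if_pos hi, ?_⟩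
  rw [← sum_add_sum_compl X]
  congr 1 <;> refine sum_congr rfl fun i hi => ?_
  · simp only [if_pos hi]
  · simp only [if_neg (mem_compl.mp hi), (hb i).2]

theorem forall_eqOn_pos_iff (w0 : ℝ) (u : (i : ι) → D i → ℝ) (X : Finset ι)
    (a : (i : ι) → D i) :
    (∀ x : (i : ι) → D i, (∀ i ∈ X, x i = a i) → w0 + ∑ i, u i (x i) > 0) ↔
      w0 + ∑ i ∈ X, u i (a i) + ∑ i ∈ Xᶜ, univ.inf' univ_nonempty (u i) > 0 := by
  constructor
  · intro h
    obtain ⟨x, hx, hsum⟩ := exists_eqOn_sum_eq_sum_add_sum_compl_inf' u X a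
    linarith [h x hx]
  · intro h x hx
    linarith [sum_add_sum_compl_inf'_le_sum u hx]

end

theorem add_sum_add_sum_compl_pos_iff {ι : Type*} [Fintype ι] [DecidableEq ι]
    (w0 : ℝ) (f g : ι → ℝ) (X : Finset ι) :
    w0 + ∑ i ∈ X, f i + ∑ i ∈ Xᶜ, g i > 0 ↔
      ∑ i ∈ X, (f i - g i) > ∑ i, (f i - g i) - (w0 + ∑ i, f i) := by
  rw [← sum_add_sum_compl X (fun i => f i - g i), ← sum_add_sum_compl X f,
    sum_sub_distrib, sum_sub_distrib]
  constructor <;> intro h <;> linarith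

theorem xlc_weak_axp_characterization_general
    {m : ℕ} (D : Fin m → Type) [∀ i, Fintype (D i)] [∀ i, Nonempty (D i)]
    (w0 : ℝ) (u : (i : Fin m) → D i → ℝ)
    (a : (i : Fin m) → D i)
    (X : Finset (Fin m)) :
    (∀ i, 0 ≤ u i (a i) - Finset.univ.inf' Finset.univ_nonempty (u i)) ∧
    ((∀ x : (i : Fin m) → D i, (∀ i ∈ X, x i = a i) → w0 + ∑ i, u i (x i) > 0) ↔
      w0 + ∑ i ∈ X, u i (a i) +
        ∑ i ∈ Xᶜ, Finset.univ.inf' Finset.univ_nonempty (u i) > 0) ∧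
    ((w0 + ∑ i ∈ X, u i (a i) +
        ∑ i ∈ Xᶜ, Finset.univ.inf' Finset.univ_nonempty (u i) > 0) ↔
      ∑ i ∈ X, (u i (a i) - Finset.univ.inf' Finset.univ_nonempty (u i)) >
        (∑ i, (u i (a i) - Finset.univ.inf' Finset.univ_nonempty (u i))) -
          (w0 + ∑ i, u i (a i))) :=
  ⟨fun _ => sub_nonneg.mpr (inf'_le _ (mem_univ _)), forall_eqOn_pos_iff w0 u X a,
    add_sum_add_sum_compl_pos_iff w0 (fun i => u i (a i)) _ X⟩

/-- Characterization of weak AXp's of an extended linear classifier (eqs. (36)–(39)):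
with `ν(x) = w₀ + Σᵢ uᵢ(xᵢ)`, instance `a` with `ν(a) > 0`,
`δᵢ = uᵢ(aᵢ) − min_{u ∈ Dᵢ} uᵢ(u) ≥ 0` and `Φ = Σᵢ δᵢ − ν(a)`, a set `X` is a weak AXp
iff `w₀ + Σ_{i ∈ X} uᵢ(aᵢ) + Σ_{i ∉ X} min uᵢ > 0` iff `Σ_{i ∈ X} δᵢ > Φ`. -/
theorem xlc_weak_axp_characterization
    {m : ℕ} (hm : 1 ≤ m) (D : Fin m → Type) [∀ i, Fintype (D i)] [∀ i, Nonempty (D i)]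
    (w0 : ℝ) (u : (i : Fin m) → D i → ℝ)
    (a : (i : Fin m) → D i)
    (ha : w0 + ∑ i, u i (a i) > 0)
    (X : Finset (Fin m)) :
    (∀ i, 0 ≤ u i (a i) - Finset.univ.inf' Finset.univ_nonempty (u i)) ∧
    ((∀ x : (i : Fin m) → D i, (∀ i ∈ X, x i = a i) → w0 + ∑ i, u i (x i) > 0) ↔
      w0 + ∑ i ∈ X, u i (a i) +
        ∑ i ∈ Xᶜ, Finset.univ.inf' Finset.univ_nonempty (u i) > 0) ∧
    ((w0 + ∑ i ∈ X, u i (a i) +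
        ∑ i ∈ Xᶜ, Finset.univ.inf' Finset.univ_nonempty (u i) > 0) ↔
      ∑ i ∈ X, (u i (a i) - Finset.univ.inf' Finset.univ_nonempty (u i)) >
        (∑ i, (u i (a i) - Finset.univ.inf' Finset.univ_nonempty (u i))) -
          (w0 + ∑ i, u i (a i))) :=
  xlc_weak_axp_characterization_general D w0 u a X
end

section
/- Minimum-size abductive explanations of extended linear classifiers: with ν(x) = w_0 + Σ_{i=1}^m u_i(x_i), κ(x) = ⊕ iff ν(x) > 0, a ∈ 𝔽 with ν(a) > 0, δ_i = u_i(a_i) − min_{u ∈ D_i} u_i(u) and Φ = Σ_{i=1}^m δ_i − ν(a), the minimum cardinality of a weak AXp for (κ, a, ⊕) equals the least k such that the sum of the k largest values among δ_1, …, δ_m exceeds Φ; such a k exists since the full set F is a weak AXp (Σ_{i=1}^m δ_i − Φ = ν(a) > 0). -/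
/-!
Once the features in `X` are fixed to their values in `a`, the worst an adversary can do is move
every other feature to a minimiser of `uᵢ`, which lowers `ν` from `ν(a)` by exactly
`Σ_{i ∉ X} δᵢ`. So `X` is a weak AXp iff `Φ < Σ_{i ∈ X} δᵢ`, and among sets of a given size
the sum `Σ_{i ∈ X} δᵢ` is largest when `X` consists of the largest `δᵢ`.
-/

open Finset

theorem Fin.val_le_of_strictMono {n m : ℕ} {g : Fin n → Fin m} (hg : StrictMono g) (j : Fin n) :
    (j : ℕ) ≤ g j :=
  calc (j : ℕ) = #(Iio j) := (Fin.card_Iio j).symm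
    _ ≤ #(Iio (g j)) :=
      card_le_card_of_injOn g (fun i hi => by simpa using hg (by simpa using hi))
        hg.injective.injOn
    _ = g j := Fin.card_Iio _

section SumOfLargest

variable {β : Type*} [AddCommMonoid β] [PartialOrder β] [IsOrderedAddMonoid β] {m n : ℕ}

theorem Finset.sum_le_sum_filter_val_lt_of_antitone {f : Fin m → β} (hf : Antitone f)
    {S : Finset (Fin m)} (hS : #S = n) :
    ∑ i ∈ S, f i ≤ ∑ i ∈ univ.filter (fun i : Fin m => (i : ℕ) < n), f i := by
  have hnm : n ≤ m := hS ▸ card_le_univ S |>.trans_eq (Fintype.card_fin m)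
  have hfirst : univ.filter (fun i : Fin m => (i : ℕ) < n) = univ.map (Fin.castLEEmb hnm) := by
    ext i
    simp only [mem_filter, mem_univ, true_and, mem_map]
    exact ⟨fun hi => ⟨⟨i, hi⟩, rfl⟩, by rintro ⟨j, rfl⟩; exact j.isLt⟩
  rw [← map_orderEmbOfFin_univ S hS, hfirst, sum_map, sum_map]
  exact sum_le_sum fun j _ =>
    hf (Fin.val_le_of_strictMono (S.orderEmbOfFin hS).strictMono j)

theorem exists_card_eq_lt_sum_iff {g : Fin m → β} (σ : Equiv.Perm (Fin m))
    (hg : Antitone (g ∘ σ)) (c : β) :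
    (∃ X : Finset (Fin m), #X = n ∧ c < ∑ i ∈ X, g i) ↔
      n ≤ m ∧ c < ∑ i ∈ univ.filter (fun i : Fin m => (i : ℕ) < n), g (σ i) := by
  constructor
  · rintro ⟨X, rfl, hX⟩
    refine ⟨card_le_univ X |>.trans_eq (Fintype.card_fin m), hX.trans_le ?_⟩
    calc ∑ i ∈ X, g i = ∑ i ∈ X.map σ.symm.toEmbedding, g (σ i) := by simp [sum_map]
      _ ≤ _ := sum_le_sum_filter_val_lt_of_antitone hg (card_map _)
  · rintro ⟨hn, hc⟩
    refine ⟨(univ.filter fun i : Fin m => (i : ℕ) < n).map σ.toEmbedding, ?_, ?_⟩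
    · rw [card_map, Fin.card_filter_val_lt, min_eq_right hn]
    · rwa [sum_map]

end SumOfLargest

namespace XLC

variable {ι : Type*} [Fintype ι] {D : ι → Type*}

/-- The weak AXp condition for an instance `a` with `κ(a) = ⊕`. -/
def IsWeakAXp (w0 : ℝ) (u : ∀ i, D i → ℝ) (a : ∀ i, D i) (X : Finset ι) : Prop :=
  ∀ x : ∀ i, D i, (∀ i ∈ X, x i = a i) → w0 + ∑ i, u i (x i) > 0

theorem sum_apply_eq_sub_sum_compl [DecidableEq ι] {u : ∀ i, D i → ℝ} {a x : ∀ i, D i}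
    {X : Finset ι} (hx : ∀ i ∈ X, x i = a i) :
    ∑ i, u i (x i) = ∑ i, u i (a i) - ∑ i ∈ Xᶜ, (u i (a i) - u i (x i)) := by
  rw [sum_sub_distrib, ← sum_add_sum_compl X fun i => u i (x i),
    ← sum_add_sum_compl X fun i => u i (a i), sum_congr rfl fun i hi => by rw [hx i hi]]
  ring

variable [∀ i, Fintype (D i)] [∀ i, Nonempty (D i)]

def delta (u : ∀ i, D i → ℝ) (a : ∀ i, D i) (i : ι) : ℝ :=
  u i (a i) - univ.inf' univ_nonempty (u i)

variable [DecidableEq ι] {w0 : ℝ} {u : ∀ i, D i → ℝ} {a : ∀ i, D i} {X : Finset ι}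

theorem isWeakAXp_iff_sum_compl_delta_lt :
    IsWeakAXp w0 u a X ↔ ∑ i ∈ Xᶜ, delta u a i < w0 + ∑ i, u i (a i) := by
  constructor
  · intro hX
    choose b hb using fun i => exists_mem_eq_inf' (univ_nonempty (α := D i)) (u i)
    have hworst := hX (X.piecewise a b) fun i hi => X.piecewise_eq_of_mem a b hi
    rw [sum_apply_eq_sub_sum_compl fun i hi => X.piecewise_eq_of_mem a b hi] at hworst
    have hdelta : ∑ i ∈ Xᶜ, (u i (a i) - u i (X.piecewise a b i)) = ∑ i ∈ Xᶜ, delta u a i :=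
      sum_congr rfl fun i hi => by
        rw [X.piecewise_eq_of_notMem a b (mem_compl.mp hi), ← (hb i).2]; rfl
    linarith
  · intro hlt x hx
    rw [sum_apply_eq_sub_sum_compl hx]
    have : ∑ i ∈ Xᶜ, (u i (a i) - u i (x i)) ≤ ∑ i ∈ Xᶜ, delta u a i :=
      sum_le_sum fun i _ => sub_le_sub_left (inf'_le _ (mem_univ _)) _
    linarith

theorem isWeakAXp_iff_lt_sum_delta :
    IsWeakAXp w0 u a X ↔ ∑ i, delta u a i - (w0 + ∑ i, u i (a i)) < ∑ i ∈ X, delta u a i := by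
  rw [isWeakAXp_iff_sum_compl_delta_lt, ← sum_add_sum_compl X (delta u a)]
  constructor <;> intro h <;> linarith

theorem isWeakAXp_univ (ha : w0 + ∑ i, u i (a i) > 0) : IsWeakAXp w0 u a univ := by
  rwa [isWeakAXp_iff_sum_compl_delta_lt, compl_univ, sum_empty]

end XLC

open XLC

theorem xlc_min_size_weak_axp_general
    {m : ℕ} (D : Fin m → Type) [∀ i, Fintype (D i)] [∀ i, Nonempty (D i)]
    (w0 : ℝ) (u : (i : Fin m) → D i → ℝ)
    (a : (i : Fin m) → D i)
    (ha : w0 + ∑ i, u i (a i) > 0)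
    (σ : Equiv.Perm (Fin m))
    (hσ : Antitone (fun i =>
      u (σ i) (a (σ i)) - Finset.univ.inf' Finset.univ_nonempty (u (σ i)))) :
    ∃ k : ℕ,
      IsLeast {n : ℕ | n ≤ m ∧
        (∑ i, (u i (a i) - Finset.univ.inf' Finset.univ_nonempty (u i))) -
            (w0 + ∑ i, u i (a i)) <
          ∑ i ∈ Finset.univ.filter (fun i : Fin m => (i : ℕ) < n),
            (u (σ i) (a (σ i)) - Finset.univ.inf' Finset.univ_nonempty (u (σ i)))} k ∧
      IsLeast {n : ℕ | ∃ X : Finset (Fin m), X.card = n ∧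
        ∀ x : (i : Fin m) → D i, (∀ i ∈ X, x i = a i) → w0 + ∑ i, u i (x i) > 0} k := by
  set sizes := {n : ℕ | ∃ X : Finset (Fin m), X.card = n ∧ IsWeakAXp w0 u a X}
  have hsizes : sizes = {n : ℕ | n ≤ m ∧ ∑ i, delta u a i - (w0 + ∑ i, u i (a i)) <
      ∑ i ∈ univ.filter (fun i : Fin m => (i : ℕ) < n), delta u a (σ i)} := by
    ext n
    simp only [sizes, Set.mem_ofPred_eq, isWeakAXp_iff_lt_sum_delta]
    exact exists_card_eq_lt_sum_iff (g := delta u a) σ hσ _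
  have hm : m ∈ sizes := ⟨univ, card_fin m, isWeakAXp_univ ha⟩
  exact ⟨sInf sizes, hsizes ▸ isLeast_csInf ⟨m, hm⟩, isLeast_csInf ⟨m, hm⟩⟩

/-- Minimum-size abductive explanations of extended linear classifiers: with
`ν(x) = w₀ + Σᵢ uᵢ(xᵢ)`, prediction `⊕` iff `ν(x) > 0`, instance `a` with `ν(a) > 0`,
`δᵢ = uᵢ(aᵢ) − min_{u ∈ Dᵢ} uᵢ(u)` and `Φ = Σᵢ δᵢ − ν(a)`, the minimum cardinality of a
weak AXp for `(κ, a, ⊕)` equals the least `k` such that the sum of the `k` largest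
values among `δ₁,…,δ_m` (sorted by the permutation `σ`) exceeds `Φ`; such `k` exists
since the full feature set is a weak AXp. -/
theorem xlc_min_size_weak_axp
    {m : ℕ} (hm : 1 ≤ m) (D : Fin m → Type) [∀ i, Fintype (D i)] [∀ i, Nonempty (D i)]
    (w0 : ℝ) (u : (i : Fin m) → D i → ℝ)
    (a : (i : Fin m) → D i)
    (ha : w0 + ∑ i, u i (a i) > 0)
    (σ : Equiv.Perm (Fin m))
    (hσ : Antitone (fun i =>
      u (σ i) (a (σ i)) - Finset.univ.inf' Finset.univ_nonempty (u (σ i)))) :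
    ∃ k : ℕ,
      IsLeast {n : ℕ | n ≤ m ∧
        (∑ i, (u i (a i) - Finset.univ.inf' Finset.univ_nonempty (u i))) -
            (w0 + ∑ i, u i (a i)) <
          ∑ i ∈ Finset.univ.filter (fun i : Fin m => (i : ℕ) < n),
            (u (σ i) (a (σ i)) - Finset.univ.inf' Finset.univ_nonempty (u (σ i)))} k ∧
      IsLeast {n : ℕ | ∃ X : Finset (Fin m), X.card = n ∧
        ∀ x : (i : Fin m) → D i, (∀ i ∈ X, x i = a i) → w0 + ∑ i, u i (x i) > 0} k :=
  xlc_min_size_weak_axp_general D w0 u a ha σ hσ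
end
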